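/- arXiv:1508.06269 — 2 statements merged into one kernel-verified Lean document; each statement's English description precedes it below -/
import Mathlib

section
/- (One-step optimality of the equilibrium value function.) With V_t^i and the equilibrium generating function θ defined by the backward recursion, and (β*, μ*) by the forward recursion, for all t, i, public history a_{1:t-1}, private history x_{1:t}^i, and any one-stage deviation β_t^i: V_t^i(μ*_t[a_{1:t-1}], x_t^i) ≥ E^{β_t^i β*_t^{-i}, μ*_t[a_{1:t-1}]}[ R^i(X_t, A_t) + V_{t+1}^i( F(μ*_t[a_{1:t-1}], β*_t(·|a_{1:t-1}, ·), A_t), X_{t+1}^i ) | a_{1:t-1}, x_{1:t}^i ], where the future belief is updated using the equilibrium prescription β*_t regardless of the deviation. -/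
open scoped Classical BigOperators
open Finset

noncomputable section

namespace SPBE

variable (N T : ℕ) (X A : Fin N → Type)
  [∀ i, Fintype (X i)] [∀ i, Fintype (A i)]
  [∀ i, Nonempty (X i)] [∀ i, Nonempty (A i)]
  (Q1 : ∀ i, X i → ℝ)
  (Qk : ℕ → ∀ i, X i → (∀ j, A j) → X i → ℝ)
  (R : ∀ _ : Fin N, (∀ j, X j) → (∀ j, A j) → ℝ)
  (θ : ℕ → (∀ j, X j → ℝ) → ∀ j, X j → A j → ℝ)

/-- `π` is a vector of marginal beliefs (a product belief). -/
def IsBelief (π : ∀ j, X j → ℝ) : Prop :=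
  ∀ j, (∀ x, 0 ≤ π j x) ∧ (∑ x, π j x) = 1

def KerStoch : Prop :=
  (∀ i, (∀ x, 0 ≤ Q1 i x) ∧ (∑ x, Q1 i x) = 1) ∧
  (∀ t i x a, (∀ x', 0 ≤ Qk t i x a x') ∧ (∑ x', Qk t i x a x') = 1)

/-- The equilibrium generating function produces prescriptions that are probability
distributions at every (product) belief. -/
def ThetaStoch : Prop :=
  ∀ t π, IsBelief N X π → ∀ j x, (∀ b, 0 ≤ θ t π j x b) ∧ (∑ b, θ t π j x b) = 1

/-- One-player Bayes update `F̄` (kernel `Qk t'` is used for the belief at time `t'`). -/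
def Fbar (t' : ℕ) (i : Fin N) (πi : X i → ℝ) (γrow : X i → ℝ) (av : ∀ j, A j) :
    X i → ℝ :=
  fun x' =>
    if 0 < ∑ x, πi x * γrow x then
      (∑ x, πi x * γrow x * Qk t' i x av x') / (∑ x, πi x * γrow x)
    else ∑ x, πi x * Qk t' i x av x'

/-- Vector Bayes update `F(π, γ, a)` producing the belief at time `t'`. -/
def Fupd (t' : ℕ) (π : ∀ j, X j → ℝ) (γ : ∀ j, X j → A j → ℝ) (av : ∀ j, A j) :
    ∀ j, X j → ℝ :=
  fun j => Fbar N X A Qk t' j (π j) (fun x => γ j x (av j)) av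

/-- The backward-recursive value functions `V_t^i(π, x^i)` associated with the
equilibrium generating function `θ` (periods are 0-based, `V_T ≡ 0`). -/
def V : ℕ → (∀ j, X j → ℝ) → ∀ i, X i → ℝ :=
  fun t π i xi =>
    if h : t < T then
      ∑ x : ∀ j, X j, ∑ a : ∀ j, A j, ∑ xi' : X i,
        (if x i = xi then ∏ j ∈ univ.erase i, π j (x j) else 0) *
        (∏ j, θ t π j (x j) (a j)) *
        Qk (t + 1) i xi a xi' *
        (R i x a + V (t + 1) (Fupd N X A Qk (t + 1) π (θ t π) a) i xi')
    else 0
  termination_by t => T - t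
  decreasing_by omega

/-- The stage objective of player `i` with own (possibly deviating) mixed action row `p`,
the others playing `θ_t[π]`, and the continuation evaluated through `V_{t+1}` with the
belief updated by the *equilibrium* prescriptions `θ_t[π]`. -/
def Obj (t : ℕ) (π : ∀ j, X j → ℝ) (i : Fin N) (xi : X i) (p : A i → ℝ) : ℝ :=
  ∑ x : ∀ j, X j, ∑ a : ∀ j, A j, ∑ xi' : X i,
    (if x i = xi then ∏ j ∈ univ.erase i, π j (x j) else 0) *
    (p (a i) * ∏ j ∈ univ.erase i, θ t π j (x j) (a j)) *
    Qk (t + 1) i xi a xi' *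
    (R i x a + V N T X A Qk R θ (t + 1) (Fupd N X A Qk (t + 1) π (θ t π) a) i xi')

/-- The fixed point property defining the equilibrium generating function `θ`:
at every period and every product belief, each player's prescription row maximizes
the stage objective against the others' prescriptions. -/
def FixedPoint : Prop :=
  ∀ t, t < T → ∀ π, IsBelief N X π → ∀ (i : Fin N) (xi : X i) (p : A i → ℝ),
    (∀ b, 0 ≤ p b) → (∑ b, p b) = 1 →
    Obj N T X A Qk R θ t π i xi p ≤ Obj N T X A Qk R θ t π i xi (θ t π i xi)

/-- The forward belief recursion `μ*`: `μ*_0 = ∏ Q_1^i` and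
`μ*_{t+1}[a_{1:t}] = F(μ*_t[a_{1:t-1}], θ_t[μ*_t], a_t)`. -/
def μstar : ℕ → (ℕ → ∀ j, A j) → ∀ j, X j → ℝ
  | 0, _ => fun j => Q1 j
  | (t + 1), a =>
      Fupd N X A Qk (t + 1) (μstar t a) (θ t (μstar t a)) (a t)

/-- Update a history function at one time point. -/
def upd {α : Type*} (h : ℕ → α) (t : ℕ) (v : α) : ℕ → α :=
  fun s => if s = t then v else h s

/-- The expected continuation reward of player `i` from period `t` on, given the public
history `ah`, its own type history `xh`, the current joint type `xcur` (with
`xcur i = xh t`), when player `i` uses the history-based strategy `βi` and all other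
players use the equilibrium strategies `β*` (i.e. `θ` applied to the forward beliefs). -/
def cont (i : Fin N)
    (βi : ℕ → (ℕ → ∀ j, A j) → (ℕ → X i) → A i → ℝ) :
    ℕ → (ℕ → ∀ j, A j) → (ℕ → X i) → (∀ j, X j) → ℝ :=
  fun t ah xh xcur =>
    if h : t < T then
      ∑ a : ∀ j, A j, ∑ x' : ∀ j, X j,
        (βi t ah xh (a i) *
          ∏ j ∈ univ.erase i, θ t (μstar N X A Q1 Qk θ t ah) j (xcur j) (a j)) *
        (∏ j, Qk (t + 1) j (xcur j) a (x' j)) *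
        (R i xcur a + cont i βi (t + 1) (upd ah t a) (upd xh (t + 1) (x' i)) x')
    else 0
  termination_by t => T - t
  decreasing_by omega

/-- The conditional expectation `E^{β^i β*^{-i}, μ}[ Σ_{n=t}^T R^i | a_{1:t-1}, x_{1:t}^i ]`:
the current types of the other players are drawn from the belief `μ^{-i}` and the game
evolves forward by the kernels and strategies. -/
def contVal (i : Fin N)
    (βi : ℕ → (ℕ → ∀ j, A j) → (ℕ → X i) → A i → ℝ)
    (t : ℕ) (ah : ℕ → ∀ j, A j) (xh : ℕ → X i) (μ : ∀ j, X j → ℝ) : ℝ :=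
  ∑ xcur : ∀ j, X j,
    (if xcur i = xh t then ∏ j ∈ univ.erase i, μ j (xcur j) else 0) *
    cont N T X A Q1 Qk R θ i βi t ah xh xcur

/-- Player `i`'s equilibrium strategy `β*^i`, as a history-based strategy. -/
def βeq (i : Fin N) : ℕ → (ℕ → ∀ j, A j) → (ℕ → X i) → A i → ℝ :=
  fun t ah xh ai => θ t (μstar N X A Q1 Qk θ t ah) i (xh t) ai


lemma isBelief_μstar (hK : KerStoch N X A Q1 Qk) (hθ : ThetaStoch N X A θ) :
    ∀ t ah, IsBelief N X (μstar N X A Q1 Qk θ t ah) := by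
  intro t
  induction t with
  | zero => intro ah j; exact ⟨(hK.1 j).1, (hK.1 j).2⟩
  | succ t ih =>
    intro ah j
    have hb := ih ah
    have hγ := hθ t _ hb
    simp only [μstar, Fupd, Fbar]
    constructor
    · intro x'
      split
      · apply div_nonneg
        · exact Finset.sum_nonneg fun x _ => mul_nonneg
            (mul_nonneg ((hb j).1 x) ((hγ j x).1 _)) ((hK.2 (t+1) j x _).1 x')
        · exact le_of_lt ‹_›
      · exact Finset.sum_nonneg fun x _ => mul_nonneg ((hb j).1 x)
          ((hK.2 (t+1) j x _).1 x')
    · by_cases hpos :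
        0 < ∑ x, μstar N X A Q1 Qk θ t ah j x * θ t (μstar N X A Q1 Qk θ t ah) j x (ah t j)
      · simp only [if_pos hpos, ← Finset.sum_div, div_eq_one_iff_eq (ne_of_gt hpos)]
        rw [Finset.sum_comm]
        refine Finset.sum_congr rfl fun x _ => ?_
        rw [← Finset.mul_sum, (hK.2 (t+1) j x (ah t)).2, mul_one]
      · simp only [if_neg hpos]
        rw [Finset.sum_comm]
        calc (∑ x, ∑ x', μstar N X A Q1 Qk θ t ah j x * Qk (t+1) j x (ah t) x')
            = ∑ x, μstar N X A Q1 Qk θ t ah j x * 1 := by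
              refine Finset.sum_congr rfl fun x _ => ?_
              rw [← Finset.mul_sum, (hK.2 (t+1) j x (ah t)).2]
          _ = 1 := by simp [(hb j).2]

lemma Obj_theta_eq_V (t : ℕ) (ht : t < T) (π : ∀ j, X j → ℝ) (i : Fin N) (xi : X i) :
    Obj N T X A Qk R θ t π i xi (θ t π i xi) = V N T X A Qk R θ t π i xi := by
  rw [V, dif_pos ht, Obj]
  refine Finset.sum_congr rfl fun x _ => Finset.sum_congr rfl fun a _ =>
    Finset.sum_congr rfl fun xi' _ => ?_
  by_cases h : x i = xi
  · rw [← Finset.mul_prod_erase univ (fun j => θ t π j (x j) (a j)) (mem_univ i), h]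
  · simp [h]

/-- one-step optimality of the equilibrium value function: at every
period `t`, public history `a_{1:t-1}` and own type `x_t^i`, the backward-recursive value
`V_t^i(μ*_t[a_{1:t-1}], x_t^i)` dominates the expected one-stage-deviation payoff, where
the deviating mixed action row `p` may be arbitrary, the other players use the
equilibrium prescriptions, and the future belief is updated using the *equilibrium*
prescriptions regardless of the deviation. -/
theorem one_step_optimality
    (hK : KerStoch N X A Q1 Qk)
    (hθ : ThetaStoch N X A θ)
    (hFP : FixedPoint N T X A Qk R θ) :
    ∀ (i : Fin N) (t : ℕ), t < T →
    ∀ (ah : ℕ → ∀ j, A j) (xh : ℕ → X i) (p : A i → ℝ),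
      (∀ b, 0 ≤ p b) → (∑ b, p b) = 1 →
      Obj N T X A Qk R θ t (μstar N X A Q1 Qk θ t ah) i (xh t) p
        ≤ V N T X A Qk R θ t (μstar N X A Q1 Qk θ t ah) i (xh t) := by
  intro i t ht ah xh p hp hsum
  have hb := isBelief_μstar N X A Q1 Qk θ hK hθ t ah
  rw [← Obj_theta_eq_V N T X A Qk R θ t ht]
  exact hFP t ht _ hb i (xh t) p hp hsum

end SPBE
end
end

section
/- (Deviation-independence of continuation laws.) For any strategy β_{t:T}^i of player i (possibly deviating at time t) played against the equilibrium strategies β*^{-i}_{t:T} with equilibrium beliefs: E^{β^i_{t:T} β*^{-i}_{t:T}, μ*_t[a_{1:t-1}]}[ Σ_{n=t+1}^T R^i(X_n, A_n) | a_{1:t}, x_{1:t+1}^i ] = E^{β^i_{t+1:T} β*^{-i}_{t+1:T}, μ*_{t+1}[a_{1:t}]}[ Σ_{n=t+1}^T R^i(X_n, A_n) | a_{1:t}, x_{1:t+1}^i ]; in particular the conditional expected continuation reward given (a_{1:t}, x_{1:t+1}^i) does not depend on player i's time-t behavioral strategy β_t^i. -/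
open scoped Classical BigOperators
open Finset

noncomputable section

namespace SPBE

variable (N T : ℕ) (X A : Fin N → Type)
  [∀ i, Fintype (X i)] [∀ i, Fintype (A i)]
  [∀ i, Nonempty (X i)] [∀ i, Nonempty (A i)]
  (Q1 : ∀ i, X i → ℝ)
  (Qk : ℕ → ∀ i, X i → (∀ j, A j) → X i → ℝ)
  (R : ∀ _ : Fin N, (∀ j, X j) → (∀ j, A j) → ℝ)
  (θ : ℕ → (∀ j, X j → ℝ) → ∀ j, X j → A j → ℝ)

/-- Unnormalized conditional weight of the continuation reward `Σ_{n=t+1}^T R^i` jointly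
with the conditioning event `(a_t, x_{t+1}^i)`, starting from the time-`t` belief
`μ*_t[a_{1:t-1}]`; `τ` is the 0-based index of period `t`. -/
def devNum (i : Fin N)
    (βi : ℕ → (ℕ → ∀ j, A j) → (ℕ → X i) → A i → ℝ)
    (τ : ℕ) (ah : ℕ → ∀ j, A j) (xh : ℕ → X i) : ℝ :=
  ∑ xcur : ∀ j, X j, ∑ x' : ∀ j, X j,
    (if xcur i = xh τ then ∏ j ∈ univ.erase i, μstar N X A Q1 Qk θ τ ah j (xcur j)
      else 0) *
    (βi τ ah xh (ah τ i) *
      ∏ j ∈ univ.erase i, θ τ (μstar N X A Q1 Qk θ τ ah) j (xcur j) (ah τ j)) *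
    (∏ j, Qk (τ + 1) j (xcur j) (ah τ) (x' j)) *
    (if x' i = xh (τ + 1) then 1 else 0) *
    cont N T X A Q1 Qk R θ i βi (τ + 1) ah xh x'

/-- Probability of the conditioning event `(a_t, x_{t+1}^i)` under the time-`t` belief. -/
def devDen (i : Fin N)
    (βi : ℕ → (ℕ → ∀ j, A j) → (ℕ → X i) → A i → ℝ)
    (τ : ℕ) (ah : ℕ → ∀ j, A j) (xh : ℕ → X i) : ℝ :=
  ∑ xcur : ∀ j, X j,
    (if xcur i = xh τ then ∏ j ∈ univ.erase i, μstar N X A Q1 Qk θ τ ah j (xcur j)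
      else 0) *
    (βi τ ah xh (ah τ i) *
      ∏ j ∈ univ.erase i, θ τ (μstar N X A Q1 Qk θ τ ah) j (xcur j) (ah τ j)) *
    Qk (τ + 1) i (xh τ) (ah τ) (xh (τ + 1))

/-- Sum over a pi type of a product factorizes. -/
lemma sum_pi_prod (g : ∀ j, X j → ℝ) :
    ∑ x : ∀ j, X j, ∏ j, g j (x j) = ∏ j, ∑ x, g j x :=
  (Fintype.prod_sum fun j x => g j x).symm

/-- Master factorization lemma: summing over a pi type with the `i`-th coordinate
pinned to `v`, a product over the other coordinates times a factor at `i` factorizes. -/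
lemma sum_pi_master (i : Fin N) (v : X i) (f : X i → ℝ) (g : ∀ j, X j → ℝ) :
    (∑ x : ∀ j, X j,
        if x i = v then (∏ j ∈ univ.erase i, g j (x j)) * f (x i) else 0)
      = f v * ∏ j ∈ univ.erase i, ∑ x, g j x := by
  classical
  set g' : ∀ j, X j → ℝ :=
    Function.update g i (fun y => if y = v then (1 : ℝ) else 0) with hg'
  have key : ∀ x : ∀ j, X j,
      (if x i = v then (∏ j ∈ univ.erase i, g j (x j)) * f (x i) else 0)
        = f v * ∏ j, g' j (x j) := by
    intro x
    have he : ∏ j ∈ univ.erase i, g' j (x j) = ∏ j ∈ univ.erase i, g j (x j) :=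
      Finset.prod_congr rfl fun j hj => by
        rw [hg', Function.update_of_ne (Finset.mem_erase.mp hj).1]
    rw [← Finset.mul_prod_erase univ (fun j => g' j (x j)) (Finset.mem_univ i), he,
      hg', Function.update_self]
    by_cases h : x i = v
    · rw [if_pos h, if_pos h, h]; ring
    · rw [if_neg h, if_neg h]; ring
  simp_rw [key]
  rw [← Finset.mul_sum, sum_pi_prod N X g',
    ← Finset.mul_prod_erase univ (fun j => ∑ x, g' j x) (Finset.mem_univ i)]
  have h1 : (∑ x, g' i x) = 1 := by
    rw [hg', Function.update_self]; simp
  have h2 : ∏ j ∈ univ.erase i, (∑ x, g' j x) = ∏ j ∈ univ.erase i, ∑ x, g j x :=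
    Finset.prod_congr rfl fun j hj => by
      rw [hg', Function.update_of_ne (Finset.mem_erase.mp hj).1]
  rw [h1, h2, one_mul]

/-- The forward beliefs are product beliefs. -/
lemma μstar_isBelief (hK : KerStoch N X A Q1 Qk) (hθ : ThetaStoch N X A θ)
    (t : ℕ) (ah : ℕ → ∀ j, A j) : IsBelief N X (μstar N X A Q1 Qk θ t ah) := by
  induction t with
  | zero => exact fun j => hK.1 j
  | succ t ih =>
    intro j
    set π := μstar N X A Q1 Qk θ t ah with hπ
    have hπ0 : ∀ x, 0 ≤ π j x := (ih j).1
    have hγ0 : ∀ x, 0 ≤ θ t π j x (ah t j) := fun x => (hθ t π ih j x).1 _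
    have hQ0 : ∀ x x', 0 ≤ Qk (t + 1) j x (ah t) x' :=
      fun x x' => (hK.2 (t + 1) j x (ah t)).1 x'
    have hμ : μstar N X A Q1 Qk θ (t + 1) ah j
        = Fbar N X A Qk (t + 1) j (π j) (fun x => θ t π j x (ah t j)) (ah t) := rfl
    by_cases h : 0 < ∑ x, π j x * θ t π j x (ah t j)
    · constructor
      · intro x'
        rw [hμ]; unfold Fbar
        rw [if_pos h]
        exact div_nonneg (Finset.sum_nonneg fun x _ =>
          mul_nonneg (mul_nonneg (hπ0 x) (hγ0 x)) (hQ0 x x')) h.le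
      · simp only [hμ]; unfold Fbar
        simp only [if_pos h]
        rw [← Finset.sum_div]
        rw [Finset.sum_comm]
        have : ∀ x ∈ (univ : Finset (X j)),
            (∑ x', π j x * θ t π j x (ah t j) * Qk (t + 1) j x (ah t) x')
              = π j x * θ t π j x (ah t j) := fun x _ => by
          rw [← Finset.mul_sum, (hK.2 (t + 1) j x (ah t)).2, mul_one]
        rw [Finset.sum_congr rfl this, div_self (ne_of_gt h)]
    · constructor
      · intro x'
        rw [hμ]; unfold Fbar
        rw [if_neg h]
        exact Finset.sum_nonneg fun x _ => mul_nonneg (hπ0 x) (hQ0 x x')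
      · simp only [hμ]; unfold Fbar
        simp only [if_neg h]
        rw [Finset.sum_comm]
        have : ∀ x ∈ (univ : Finset (X j)),
            (∑ x', π j x * Qk (t + 1) j x (ah t) x') = π j x := fun x _ => by
          rw [← Finset.mul_sum, (hK.2 (t + 1) j x (ah t)).2, mul_one]
        rw [Finset.sum_congr rfl this, (ih j).2]

/-- Closed form of `devDen`. -/
lemma devDen_eq (i : Fin N)
    (βi : ℕ → (ℕ → ∀ j, A j) → (ℕ → X i) → A i → ℝ)
    (τ : ℕ) (ah : ℕ → ∀ j, A j) (xh : ℕ → X i) :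
    devDen N X A Q1 Qk θ i βi τ ah xh
      = (βi τ ah xh (ah τ i) * Qk (τ + 1) i (xh τ) (ah τ) (xh (τ + 1))) *
        ∏ j ∈ univ.erase i, ∑ x, μstar N X A Q1 Qk θ τ ah j x *
          θ τ (μstar N X A Q1 Qk θ τ ah) j x (ah τ j) := by
  classical
  set π := μstar N X A Q1 Qk θ τ ah with hπ
  set g : ∀ j, X j → ℝ := fun j x => π j x * θ τ π j x (ah τ j) with hg
  have key : ∀ xcur : ∀ j, X j,
      (if xcur i = xh τ then ∏ j ∈ univ.erase i, π j (xcur j) else 0) *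
        (βi τ ah xh (ah τ i) *
          ∏ j ∈ univ.erase i, θ τ π j (xcur j) (ah τ j)) *
        Qk (τ + 1) i (xh τ) (ah τ) (xh (τ + 1))
      = (if xcur i = xh τ then
            (∏ j ∈ univ.erase i, g j (xcur j)) * (fun _ : X i => (1 : ℝ)) (xcur i)
          else 0) *
        (βi τ ah xh (ah τ i) * Qk (τ + 1) i (xh τ) (ah τ) (xh (τ + 1))) := by
    intro xcur
    by_cases h : xcur i = xh τ
    · rw [if_pos h, if_pos h]
      have : ∏ j ∈ univ.erase i, g j (xcur j)
          = (∏ j ∈ univ.erase i, π j (xcur j)) *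
            ∏ j ∈ univ.erase i, θ τ π j (xcur j) (ah τ j) := by
        rw [← Finset.prod_mul_distrib]
      rw [this]; ring
    · rw [if_neg h, if_neg h]; ring
  unfold devDen
  rw [Finset.sum_congr rfl fun xcur _ => key xcur, ← Finset.sum_mul,
    sum_pi_master N X i (xh τ) (fun _ => (1 : ℝ)) g, one_mul, mul_comm]

/-- Closed form of `devNum`. -/
lemma devNum_eq (i : Fin N)
    (βi : ℕ → (ℕ → ∀ j, A j) → (ℕ → X i) → A i → ℝ)
    (τ : ℕ) (ah : ℕ → ∀ j, A j) (xh : ℕ → X i) :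
    devNum N T X A Q1 Qk R θ i βi τ ah xh
      = (βi τ ah xh (ah τ i) * Qk (τ + 1) i (xh τ) (ah τ) (xh (τ + 1))) *
        ∑ x' : ∀ j, X j, (if x' i = xh (τ + 1) then (1 : ℝ) else 0) *
          (∏ j ∈ univ.erase i, ∑ x, μstar N X A Q1 Qk θ τ ah j x *
            θ τ (μstar N X A Q1 Qk θ τ ah) j x (ah τ j) *
            Qk (τ + 1) j x (ah τ) (x' j)) *
          cont N T X A Q1 Qk R θ i βi (τ + 1) ah xh x' := by
  classical
  set π := μstar N X A Q1 Qk θ τ ah with hπ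
  unfold devNum
  rw [Finset.sum_comm]
  rw [Finset.mul_sum]
  refine Finset.sum_congr rfl fun x' _ => ?_
  set g : ∀ j, X j → ℝ :=
    fun j x => π j x * θ τ π j x (ah τ j) * Qk (τ + 1) j x (ah τ) (x' j) with hg
  set c : ℝ := βi τ ah xh (ah τ i) * (if x' i = xh (τ + 1) then (1 : ℝ) else 0) *
    cont N T X A Q1 Qk R θ i βi (τ + 1) ah xh x' with hc
  have key : ∀ xcur : ∀ j, X j,
      (if xcur i = xh τ then ∏ j ∈ univ.erase i, π j (xcur j) else 0) *
        (βi τ ah xh (ah τ i) *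
          ∏ j ∈ univ.erase i, θ τ π j (xcur j) (ah τ j)) *
        (∏ j, Qk (τ + 1) j (xcur j) (ah τ) (x' j)) *
        (if x' i = xh (τ + 1) then (1 : ℝ) else 0) *
        cont N T X A Q1 Qk R θ i βi (τ + 1) ah xh x'
      = (if xcur i = xh τ then
            (∏ j ∈ univ.erase i, g j (xcur j)) *
              (fun x : X i => Qk (τ + 1) i x (ah τ) (x' i)) (xcur i)
          else 0) * c := by
    intro xcur
    by_cases h : xcur i = xh τ
    · rw [if_pos h, if_pos h]
      have h1 : ∏ j, Qk (τ + 1) j (xcur j) (ah τ) (x' j)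
          = Qk (τ + 1) i (xcur i) (ah τ) (x' i) *
            ∏ j ∈ univ.erase i, Qk (τ + 1) j (xcur j) (ah τ) (x' j) :=
        (Finset.mul_prod_erase univ
          (fun j => Qk (τ + 1) j (xcur j) (ah τ) (x' j)) (Finset.mem_univ i)).symm
      have h2 : ∏ j ∈ univ.erase i, g j (xcur j)
          = ((∏ j ∈ univ.erase i, π j (xcur j)) *
              ∏ j ∈ univ.erase i, θ τ π j (xcur j) (ah τ j)) *
            ∏ j ∈ univ.erase i, Qk (τ + 1) j (xcur j) (ah τ) (x' j) := by
        rw [← Finset.prod_mul_distrib, ← Finset.prod_mul_distrib]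
      rw [h1, h2, hc]; ring
    · rw [if_neg h, if_neg h]; ring
  rw [Finset.sum_congr rfl fun xcur _ => key xcur, ← Finset.sum_mul,
    sum_pi_master N X i (xh τ) (fun x : X i => Qk (τ + 1) i x (ah τ) (x' i)) g, hc]
  by_cases h : x' i = xh (τ + 1)
  · rw [if_pos h, h]; ring
  · rw [if_neg h]; ring

/-- deviation-independence of continuation laws: conditioning the time-`t`
belief-based measure on the realized `(a_t, x_{t+1}^i)` gives exactly the time-`(t+1)`
belief-based continuation expectation; in particular the conditional expected
continuation reward given `(a_{1:t}, x_{1:t+1}^i)` does not depend on player `i`'s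
time-`t` behavioral strategy. -/
theorem deviation_independence
    (hK : KerStoch N X A Q1 Qk)
    (hθ : ThetaStoch N X A θ)
    (i : Fin N)
    (βi : ℕ → (ℕ → ∀ j, A j) → (ℕ → X i) → A i → ℝ)
    (hβ : ∀ n a' x', (∀ b, 0 ≤ βi n a' x' b) ∧ (∑ b, βi n a' x' b) = 1)
    (τ : ℕ) (hτ : τ < T) (ah : ℕ → ∀ j, A j) (xh : ℕ → X i)
    (hpos : 0 < devDen N X A Q1 Qk θ i βi τ ah xh) :
    devNum N T X A Q1 Qk R θ i βi τ ah xh / devDen N X A Q1 Qk θ i βi τ ah xh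
      = contVal N T X A Q1 Qk R θ i βi (τ + 1) ah xh
          (μstar N X A Q1 Qk θ (τ + 1) ah) := by
  classical
  have hBel : IsBelief N X (μstar N X A Q1 Qk θ τ ah) :=
    μstar_isBelief N X A Q1 Qk θ hK hθ τ ah
  set π := μstar N X A Q1 Qk θ τ ah with hπ
  set S : Fin N → ℝ := fun j => ∑ x, π j x * θ τ π j x (ah τ j) with hS
  set Nf : ∀ j, X j → ℝ :=
    fun j y => ∑ x, π j x * θ τ π j x (ah τ j) * Qk (τ + 1) j x (ah τ) y with hNf
  set c : ℝ := βi τ ah xh (ah τ i) * Qk (τ + 1) i (xh τ) (ah τ) (xh (τ + 1)) with hc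
  have hden : devDen N X A Q1 Qk θ i βi τ ah xh = c * ∏ j ∈ univ.erase i, S j :=
    devDen_eq N X A Q1 Qk θ i βi τ ah xh
  have hnum : devNum N T X A Q1 Qk R θ i βi τ ah xh
      = c * ∑ x' : ∀ j, X j, (if x' i = xh (τ + 1) then (1 : ℝ) else 0) *
          (∏ j ∈ univ.erase i, Nf j (x' j)) *
          cont N T X A Q1 Qk R θ i βi (τ + 1) ah xh x' :=
    devNum_eq N T X A Q1 Qk R θ i βi τ ah xh
  have hS0 : ∀ j, 0 ≤ S j := fun j =>
    Finset.sum_nonneg fun x _ => mul_nonneg ((hBel j).1 x) ((hθ τ π hBel j x).1 _)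
  have hpos' : 0 < c * ∏ j ∈ univ.erase i, S j := hden ▸ hpos
  have hc0 : c ≠ 0 := by
    intro h; rw [h, zero_mul] at hpos'; exact lt_irrefl 0 hpos'
  have hP0 : (∏ j ∈ univ.erase i, S j) ≠ 0 := by
    intro h; rw [h, mul_zero] at hpos'; exact lt_irrefl 0 hpos'
  have hSpos : ∀ j ∈ univ.erase i, 0 < S j := by
    intro j hj
    rcases lt_or_eq_of_le (hS0 j) with h | h
    · exact h
    · exact absurd (Finset.prod_eq_zero hj h.symm) hP0
  rw [hnum, hden, mul_div_mul_left _ _ hc0]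
  -- unfold the RHS
  unfold contVal
  have hμ1 : ∀ (j : Fin N), j ∈ univ.erase i → ∀ y : X j,
      μstar N X A Q1 Qk θ (τ + 1) ah j y = Nf j y / S j := by
    intro j hj y
    have : μstar N X A Q1 Qk θ (τ + 1) ah j
        = Fbar N X A Qk (τ + 1) j (π j) (fun x => θ τ π j x (ah τ j)) (ah τ) := rfl
    rw [this]; unfold Fbar
    rw [if_pos (hSpos j hj)]
  rw [Finset.sum_div]
  refine Finset.sum_congr rfl fun x' _ => ?_
  by_cases h : x' i = xh (τ + 1)
  · rw [if_pos h, if_pos h]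
    have : ∏ j ∈ univ.erase i, μstar N X A Q1 Qk θ (τ + 1) ah j (x' j)
        = (∏ j ∈ univ.erase i, Nf j (x' j)) / ∏ j ∈ univ.erase i, S j := by
      rw [← Finset.prod_div_distrib]
      exact Finset.prod_congr rfl fun j hj => hμ1 j hj (x' j)
    rw [this, one_mul, mul_div_right_comm]
  · rw [if_neg h, if_neg h]
    simp

end SPBE
end
end
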